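/- There exists c < ∞ such that for all z ∈ ℤ² ∖ ℤ₊: | L f(z) | ≤ c · |z|^{−7/2}, where f(z) = Im √z = |z|^{1/2} sin(θ_z/2) and L is the discrete Laplacian on ℤ². -/

import Mathlib

open Filter
open scoped Classical

namespace LERW

/-- The lattice `ℤ² = ℤ + iℤ`. -/
abbrev V : Type := ℤ × ℤ

/-- Embedding of the lattice into `ℂ`. -/
noncomputable def toC (z : V) : ℂ := (z.1 : ℂ) + (z.2 : ℂ) * Complex.I

/-- Euclidean norm of a lattice point. -/
noncomputable def nrm (z : V) : ℝ := ‖toC z‖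

/-- Euclidean diameter of a set of lattice points. -/
noncomputable def diamV (K : Set V) : ℝ := Metric.diam (toC '' K)

/-- Lattice adjacency. -/
def adj (z w : V) : Prop := (z.1 - w.1).natAbs + (z.2 - w.2).natAbs = 1

/-- A (nearest-neighbor) walk: a nonempty list of consecutively adjacent points. -/
def IsWalk (ω : List V) : Prop := ω ≠ [] ∧ ω.Chain' adj

def starts (ω : List V) (z : V) : Prop := ω.head? = some z

def ends (ω : List V) (w : V) : Prop := ω.getLast? = some w

/-- The simple random walk weight `4^{-(number of steps)}` of a walk. -/
noncomputable def pweight (ω : List V) : ℝ := (1 / 4 : ℝ) ^ (ω.length - 1)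

/-- The zipper edges `{k, k - i}`, `k ≥ 1`, crossing just below the positive real axis. -/
def zipper (a b : V) : Prop :=
  a.1 = b.1 ∧ 1 ≤ a.1 ∧ ((a.2 = 0 ∧ b.2 = -1) ∨ (a.2 = -1 ∧ b.2 = 0))

/-- The sign `(-1)^{number of zipper crossings}` of a walk. -/
noncomputable def qsign (ω : List V) : ℝ :=
  (-1 : ℝ) ^ ((ω.zip ω.tail).countP fun e => decide (zipper e.1 e.2))

/-- Walks from `z` to `w`, otherwise staying in `A`. -/
def WalkTo (A : Set V) (z w : V) (ω : List V) : Prop :=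
  IsWalk ω ∧ starts ω z ∧ ends ω w ∧ ∀ x ∈ ω.dropLast, x ∈ A

/-- The Poisson kernel `H_A(z,w) = P^z{S_{τ_A} = w}` for `z ∈ A`, `w ∉ A`,
and `1{z = w}` for `z ∉ A`. -/
noncomputable def H (A : Set V) (z w : V) : ℝ :=
  if z ∈ A then ∑' ω : {ω : List V // WalkTo A z w ω}, pweight ω.1
  else if z = w then 1 else 0

/-- The signed (zipper) Poisson kernel
`H^q_A(z,w) = E^z[(-1)^{Q_{τ_A}} 1{S_{τ_A} = w}]` for `z ∈ A`, `w ∉ A`,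
and `1{z = w}` for `z ∉ A`. -/
noncomputable def Hq (A : Set V) (z w : V) : ℝ :=
  if z ∈ A then ∑' ω : {ω : List V // WalkTo A z w ω}, qsign ω.1 * pweight ω.1
  else if z = w then 1 else 0

/-- Walks from `z` to `w` staying in `A`. -/
def WalkIn (A : Set V) (z w : V) (ω : List V) : Prop :=
  IsWalk ω ∧ starts ω z ∧ ends ω w ∧ ∀ x ∈ ω, x ∈ A

/-- The Green's function `G_A(z,w)` of simple random walk in `A`: the expected
number of visits to `w` strictly before `τ_A` by the walk started at `z`. -/
noncomputable def G (A : Set V) (z w : V) : ℝ :=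
  ∑' ω : {ω : List V // WalkIn A z w ω}, pweight ω.1

/-- Walks started at `z`, stopped at the exit time of `B`. -/
def StoppedWalk (B : Set V) (z : V) (ω : List V) : Prop :=
  IsWalk ω ∧ starts ω z ∧ (∀ x ∈ ω.dropLast, x ∈ B) ∧ ∀ w, ends ω w → w ∉ B

noncomputable def lastVal (f : V → ℝ) (ω : List V) : ℝ := (ω.getLast?.map f).getD 0

/-- `E^z[f(S_{τ_B})]`, the expectation of `f` at the exit point of `B`. -/
noncomputable def exitExp (B : Set V) (z : V) (f : V → ℝ) : ℝ :=
  ∑' ω : {ω : List V // StoppedWalk B z ω}, pweight ω.1 * lastVal f ω.1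

/-- `ℤ₊`, the lattice points on the nonnegative real axis. -/
def Zplus : Set V := {z | 0 ≤ z.1 ∧ z.2 = 0}

/-- The discrete disk `D_R`. -/
def ballV (R : ℝ) : Set V := {z | nrm z < R}

/-- The set `D_R ∖ ℤ₊`, whose exit time is `σ_R ∧ τ_+`. -/
def contSet (R : ℝ) : Set V := {z | nrm z < R ∧ z ∉ Zplus}

/-- `P^z{σ_R < τ_+}`. -/
noncomputable def probEscape (z : V) (R : ℝ) : ℝ :=
  exitExp (contSet R) z fun w => if w ∈ Zplus then 0 else 1

/-- The outer boundary `∂A`: the points of `ℤ² ∖ A` adjacent to `A`. -/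
def bdry (A : Set V) : Set V := {w | w ∉ A ∧ ∃ z ∈ A, adj z w}

/-- The discrete circle `C_R = ∂D_R`. -/
def circ (R : ℝ) : Set V := bdry (ballV R)

/-- `θ_z = arg z ∈ [0, 2π)`. -/
noncomputable def theta (z : V) : ℝ :=
  if 0 ≤ (toC z).arg then (toC z).arg else (toC z).arg + 2 * Real.pi

/-- `f(z) = Im √z = |z|^{1/2} sin(θ_z/2)`. -/
noncomputable def fIm (z : V) : ℝ := Real.sqrt (nrm z) * Real.sin (theta z / 2)

/-- `v(z) = lim_{R→∞} R^{1/2} P^z{σ_R < τ_+}` (the limit exists). -/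
noncomputable def v (z : V) : ℝ :=
  limUnder atTop fun R : ℝ => Real.sqrt R * probEscape z R

/-- The four lattice neighbors of a point. -/
def nbrs (z : V) : List V := [(z.1 + 1, z.2), (z.1 - 1, z.2), (z.1, z.2 + 1), (z.1, z.2 - 1)]

/-- The discrete Laplacian `Lg(z) = ¼ ∑_{|w-z|=1} g(w) - g(z)`. -/
noncomputable def Lap (g : V → ℝ) (z : V) : ℝ := (1 / 4 : ℝ) * ((nbrs z).map g).sum - g z

/-- The boundary Poisson kernel `H_{∂A}(x,y) = ¼ ∑_{x' ∈ A, x' ~ x} H_A(x',y)`. -/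
noncomputable def Hbd (A : Set V) (x y : V) : ℝ :=
  (1 / 4 : ℝ) * ((nbrs x).map fun x' => if x' ∈ A then H A x' y else 0).sum

/-- `H_A(z,E) = ∑_{w ∈ E} H_A(z,w)`. -/
noncomputable def HSet (A : Set V) (z : V) (E : Set V) : ℝ := ∑' w : E, H A z w.1

/-- `H_{∂A}(x,E) = ∑_{y ∈ E} H_{∂A}(x,y)`. -/
noncomputable def HbdSet (A : Set V) (x : V) (E : Set V) : ℝ := ∑' w : E, Hbd A x w.1

/-- `U_R`, the square of side `2R` centered at the origin. -/
def squ (R : ℝ) : Set V := {z | |(z.1 : ℝ)| < R ∧ |(z.2 : ℝ)| < R}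

/-- The segment `{0, 1, …, R}` on the nonnegative real axis. -/
def seg (R : ℝ) : Set V := {z | 0 ≤ z.1 ∧ (z.1 : ℝ) ≤ R ∧ z.2 = 0}

/-- The slit square `U_R^- = U_R ∖ {0, 1, …, R}`. -/
def Uminus (R : ℝ) : Set V := squ R \ seg R

/-- Distance from `z` to the set `{R, R+iR, R-iR, -R+iR, -R-iR}`. -/
noncomputable def cornerDist (R : ℝ) (z : V) : ℝ :=
  Metric.infDist (toC z)
    {(R : ℂ), (R : ℂ) + (R : ℂ) * Complex.I, (R : ℂ) - (R : ℂ) * Complex.I,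
      -(R : ℂ) + (R : ℂ) * Complex.I, -(R : ℂ) - (R : ℂ) * Complex.I}

/-- A self-avoiding walk through the origin: pairwise distinct, consecutively
adjacent lattice points, one of which is `0`. -/
def IsSAW0 (η : List V) : Prop := η.Chain' adj ∧ η.Nodup ∧ ((0, 0) : V) ∈ η

/-- The vertex set of a SAW. -/
def sawSet (η : List V) : Set V := {x | x ∈ η}

/-- `v_η(z) = v(z) - ∑_{y ∈ η} H^q_{ℤ²∖η}(z,y) v(y)`. -/
noncomputable def vEta (η : List V) (z : V) : ℝ :=
  v z - ∑ y ∈ η.toFinset, Hq (sawSet η)ᶜ z y * v y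

/-- The discrete harmonic conjugate `u` of `v`. -/
noncomputable def uFn (z : V) : ℝ := if 0 ≤ z.2 then v (-z.1, z.2) else -v (-z.1, z.2)

/-- `u_η(z) = u(z) - ∑_{y ∈ η} H^q_{ℤ²∖η}(z,y) u(y)`. -/
noncomputable def uEta (η : List V) (z : V) : ℝ :=
  uFn z - ∑ y ∈ η.toFinset, Hq (sawSet η)ᶜ z y * uFn y

/-- Complex conjugation on the lattice. -/
def conjV (w : V) : V := (w.1, -w.2)

/-- `h_m^η(z,w) = ½ [H^q_{D_m∖η}(z,w) + H^q_{D_m∖η}(z,w̄)]`. -/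
noncomputable def hEta (η : List V) (m : ℝ) (z w : V) : ℝ :=
  (Hq (ballV m \ sawSet η) z w + Hq (ballV m \ sawSet η) z (conjV w)) / 2

/-- `P^z{S(σ_m ∧ τ_+) = w}`. -/
noncomputable def hitPt (m : ℝ) (z w : V) : ℝ :=
  exitExp (contSet m) z fun x => if x = w then 1 else 0

/-- `μ_m(w) = ½ [P^{-1}{S(σ_m ∧ τ_+) = w} + P^{-1}{S(σ_m ∧ τ_+) = w̄}] / P^{-1}{σ_m < τ_+}`. -/
noncomputable def mu (m : ℝ) (w : V) : ℝ :=
  ((hitPt m (-1, 0) w + hitPt m (-1, 0) (conjV w)) / 2) / probEscape (-1, 0) m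

/-- `P^z{σ_R < τ_+, S(σ_R) = w}`. -/
noncomputable def escHit (z : V) (R : ℝ) (w : V) : ℝ :=
  exitExp (contSet R) z fun x => if x = w ∧ x ∉ Zplus then 1 else 0

/-- The infinite vertical strip `A_n = {x + iy : |x| < n}`. -/
def strip (n : ℝ) : Set V := {z | |(z.1 : ℝ)| < n}

/-- `v_η^{(n)}(z) = H^q_{A_n∖η}(z, -n)`. -/
noncomputable def vEtaN (η : List V) (n : ℕ) (z : V) : ℝ :=
  Hq (strip n \ sawSet η) z (-(n : ℤ), 0)

/-- `u_η^{(n)}(z) = H^q_{A_n∖η}(z, n)`. -/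
noncomputable def uEtaN (η : List V) (n : ℕ) (z : V) : ℝ :=
  Hq (strip n \ sawSet η) z ((n : ℤ), 0)

/-- `P^z{S_0, …, S_{k-1} ∈ B}`: total weight of walks with `k` vertices from `z`
staying in `B`. -/
noncomputable def stayProb (B : Set V) (z : V) (k : ℕ) : ℝ :=
  ∑' ω : {ω : List V // ω.length = k ∧ IsWalk ω ∧ starts ω z ∧ ∀ x ∈ ω, x ∈ B},
    pweight ω.1

/-- `E^z[τ_B] = ∑_{k ≥ 0} P^z{τ_B > k}`, the expected exit time of `B`. -/
noncomputable def expTime (B : Set V) (z : V) : ℝ := ∑' k : ℕ, stayProb B z (k + 1)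

end LERW

/-!
Off the slit, `f` is the imaginary part of a holomorphic branch `F` of `√w`: the principal
branch in the upper right quadrant, `I √(-w)` in the left half plane, and the lower right
quadrant follows by the symmetry `f(z̄) = f(z)`. For `|z| ≥ 4` the branch is holomorphic on the
disc of radius `|z|/2` about `z`, where `|F| ≤ √(2|z|)`. The four-point mean over `z ± 1, z ± i`
annihilates the Taylor terms of degrees `1, 2, 3`, so `L f(z)` is a fourth-order Taylor
remainder, which the Cauchy estimates on that disc bound by `O(√|z| · |z|^{-4})`. For `|z| < 4`
the crude bound `|L f(z)| ≤ √(|z| + 1)` suffices.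
-/

open Metric
open scoped Nat

namespace Complex

variable {E : Type*} [NormedAddCommGroup E] [NormedSpace ℂ E] [CompleteSpace E]

theorem norm_sub_sum_taylorSeries_le {f : ℂ → E} {c e : ℂ} {R K : ℝ}
    (hf : DiffContOnCl ℂ f (ball c R)) (hK : ∀ w ∈ sphere c R, ‖f w‖ ≤ K) (he : ‖e‖ < R)
    (N : ℕ) :
    ‖f (c + e) - ∑ n ∈ Finset.range N, (n ! : ℂ)⁻¹ • e ^ n • iteratedDeriv n f c‖
      ≤ K * (‖e‖ / R) ^ N / (1 - ‖e‖ / R) := by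
  have hR : 0 < R := (norm_nonneg e).trans_lt he
  set ρ := ‖e‖ / R
  have hρ0 : 0 ≤ ρ := by positivity
  have hρ1 : ρ < 1 := (div_lt_one hR).mpr he
  have hseries := hasSum_taylorSeries_on_ball hf.differentiableOn
    (z := c + e) (by simpa [mem_ball_iff_norm] using he)
  simp only [add_sub_cancel_left] at hseries
  have hcoeff (n : ℕ) : ‖(n ! : ℂ)⁻¹ • e ^ n • iteratedDeriv n f c‖ ≤ K * ρ ^ n := by
    have hn : (0 : ℝ) < n ! := by exact_mod_cast n.factorial_pos
    have hD := norm_iteratedDeriv_le_of_forall_mem_sphere_norm_le n hR hf hK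
    rw [norm_smul, norm_smul, norm_inv, norm_pow, Complex.norm_natCast, div_pow]
    calc (n ! : ℝ)⁻¹ * (‖e‖ ^ n * ‖iteratedDeriv n f c‖)
        ≤ (n ! : ℝ)⁻¹ * (‖e‖ ^ n * (n ! * K / R ^ n)) := by gcongr
      _ = K * (‖e‖ ^ n / R ^ n) := by field_simp
  have htail := (hasSum_nat_add_iff' N).mpr hseries
  have hgeom : HasSum (fun n => K * ρ ^ (n + N)) (K * ρ ^ N / (1 - ρ)) := by
    rw [show (fun n => K * ρ ^ (n + N)) = fun n => K * ρ ^ N * ρ ^ n from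
      funext fun n => by ring, div_eq_mul_inv]
    exact (hasSum_geometric_of_lt_one hρ0 hρ1).mul_left (K * ρ ^ N)
  exact htail.norm_le_of_bounded hgeom fun n => hcoeff (n + N)

theorem norm_fourPointMean_sub_le {f : ℂ → ℂ} {c : ℂ} {R K : ℝ} (hR : 1 < R)
    (hf : DiffContOnCl ℂ f (ball c R)) (hK : ∀ w ∈ sphere c R, ‖f w‖ ≤ K) :
    ‖(f (c + 1) + f (c - 1) + f (c + I) + f (c - I)) / 4 - f c‖
      ≤ K * R⁻¹ ^ 4 / (1 - R⁻¹) := by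
  set P : ℂ → ℂ := fun e => ∑ n ∈ Finset.range 4, (n ! : ℂ)⁻¹ • e ^ n • iteratedDeriv n f c
  have hP : (P 1 + P (-1) + P I + P (-I)) / 4 = f c := by
    norm_num [P, Finset.sum_range_succ, Nat.factorial]
    linear_combination -(iteratedDeriv 3 f c * I / 24) * I_sq
  have hrem (e : ℂ) (he : ‖e‖ = 1) : ‖f (c + e) - P e‖ ≤ K * R⁻¹ ^ 4 / (1 - R⁻¹) := by
    simpa [P, he, one_div] using norm_sub_sum_taylorSeries_le hf hK (he.trans_lt hR) 4
  rw [show (f (c + 1) + f (c - 1) + f (c + I) + f (c - I)) / 4 - f c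
      = ((f (c + 1) - P 1) + (f (c + -1) - P (-1)) + (f (c + I) - P I)
        + (f (c + -I) - P (-I))) / 4 by linear_combination hP]
  rw [norm_div, RCLike.norm_ofNat, div_le_iff₀ (by norm_num)]
  refine norm_add₄_le.trans ?_
  linarith [hrem 1 (by simp), hrem (-1) (by simp), hrem I (by simp), hrem (-I) (by simp)]

theorem cpow_half_re_im {u : ℂ} (hu : u ≠ 0) :
    (u ^ (1 / 2 : ℂ)).re = √‖u‖ * Real.cos (arg u / 2) ∧
      (u ^ (1 / 2 : ℂ)).im = √‖u‖ * Real.sin (arg u / 2) := by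
  have hexp : Real.exp (Real.log ‖u‖ / 2) = √‖u‖ := by
    rw [Real.sqrt_eq_rpow, Real.rpow_def_of_pos (norm_pos_iff.mpr hu)]
    ring_nf
  rw [cpow_def_of_ne_zero hu, exp_re, exp_im]
  simp only [mul_re, mul_im, log_re, log_im, div_ofNat_re, div_ofNat_im, one_re, one_im]
  constructor <;> ring_nf <;> rw [← hexp] <;> ring_nf

theorem re_cpow_half (u : ℂ) : (u ^ (1 / 2 : ℂ)).re = √((‖u‖ + u.re) / 2) := by
  rcases eq_or_ne u 0 with rfl | hu
  · simp
  rw [(cpow_half_re_im hu).1, Real.cos_half (neg_pi_lt_arg u).le (arg_le_pi u), cos_arg hu,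
    ← Real.sqrt_mul (norm_nonneg u)]
  congr 1
  field_simp

theorem im_cpow_half {u : ℂ} (hu : 0 ≤ u.im) : (u ^ (1 / 2 : ℂ)).im = √((‖u‖ - u.re) / 2) := by
  rcases eq_or_ne u 0 with rfl | hu0
  · simp
  rw [(cpow_half_re_im hu0).2, Real.sin_half_eq_sqrt (arg_nonneg_iff.mpr hu)
    ((arg_le_pi u).trans (by linarith [Real.pi_pos])), cos_arg hu0,
    ← Real.sqrt_mul (norm_nonneg u)]
  congr 1
  field_simp

theorem norm_cpow_half (w : ℂ) : ‖w ^ (1 / 2 : ℂ)‖ = √‖w‖ := by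
  rw [show (1 / 2 : ℂ) = ((1 / 2 : ℝ) : ℂ) by norm_num, norm_cpow_real, Real.sqrt_eq_rpow]

theorem closedBall_subset_slitPlane {u : ℂ} {r : ℝ} (hu : 0 ≤ u.re) (hr : r < ‖u‖) :
    closedBall u r ⊆ slitPlane := by
  intro w hw
  rw [mem_slitPlane_iff]
  by_contra! hw'
  have hdist : ‖w - u‖ ≤ r := by rwa [← dist_eq, ← mem_closedBall]
  have hsq : ‖u‖ ^ 2 ≤ ‖w - u‖ ^ 2 := by
    rw [Complex.sq_norm, Complex.sq_norm, normSq_apply, normSq_apply, sub_re, sub_im, hw'.2]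
    nlinarith
  nlinarith [norm_nonneg (w - u)]

end Complex

namespace LERW

open Complex

lemma toC_re (z : V) : (toC z).re = z.1 := by simp [toC]

lemma toC_im (z : V) : (toC z).im = z.2 := by simp [toC]

lemma toC_ne_zero {z : V} (hz : z ∉ Zplus) : toC z ≠ 0 := by
  intro h
  have h1 := congrArg Complex.re h
  have h2 := congrArg Complex.im h
  simp only [toC_re, toC_im, zero_re, zero_im, Int.cast_eq_zero] at h1 h2
  exact hz ⟨h1.ge, h2⟩

lemma nrm_conjV (z : V) : nrm (conjV z) = nrm z := by
  rw [nrm, nrm, ← norm_conj]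
  congr 1
  simp [toC, conjV]

lemma nbrs_map_toC (z : V) :
    (nbrs z).map toC = [toC z + 1, toC z - 1, toC z + I, toC z - I] := by
  simp only [nbrs, List.map_cons, List.map_nil, toC, List.cons.injEq, and_true]
  push_cast
  refine ⟨?_, ?_, ?_, ?_⟩ <;> ring

lemma nrm_le_of_mem_nbrs {z p : V} (hp : p ∈ nbrs z) : nrm p ≤ nrm z + 1 := by
  have := List.mem_map_of_mem (f := toC) hp
  rw [nbrs_map_toC] at this
  simp only [List.mem_cons, List.not_mem_nil, or_false] at this
  rw [nrm, nrm]
  rcases this with h | h | h | h <;> rw [h]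
  · simpa using norm_add_le (toC z) 1
  · simpa using norm_sub_le (toC z) 1
  · simpa using norm_add_le (toC z) I
  · simpa using norm_sub_le (toC z) I

lemma lap_eq (g : V → ℝ) (z : V) :
    Lap g z = (g (z.1 + 1, z.2) + g (z.1 - 1, z.2) + g (z.1, z.2 + 1) + g (z.1, z.2 - 1)) / 4
      - g z := by
  simp only [Lap, nbrs, List.map_cons, List.map_nil, List.sum_cons, List.sum_nil]
  ring

lemma lap_conjV (g : V → ℝ) (z : V) : Lap g (conjV z) = Lap (g ∘ conjV) z := by
  rw [lap_eq, lap_eq]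
  simp only [conjV, Function.comp_apply, neg_add, sub_eq_add_neg, neg_neg]
  ring

lemma abs_lap_le_of_mem_Icc {g : V → ℝ} {z : V} {B : ℝ}
    (hg : ∀ p ∈ z :: nbrs z, g p ∈ Set.Icc 0 B) : |Lap g z| ≤ B := by
  simp only [nbrs, List.mem_cons, List.not_mem_nil, or_false, forall_eq_or_imp, forall_eq,
    Set.mem_Icc] at hg
  rw [lap_eq, abs_le]
  constructor <;> linarith

lemma abs_lap_le_of_eq_im {g : V → ℝ} {z : V} {F : ℂ → ℂ} {R K : ℝ} (hR : 1 < R)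
    (hF : DiffContOnCl ℂ F (ball (toC z) R)) (hK : ∀ w ∈ sphere (toC z) R, ‖F w‖ ≤ K)
    (hg : ∀ p ∈ z :: nbrs z, g p = (F (toC p)).im) :
    |Lap g z| ≤ K * R⁻¹ ^ 4 / (1 - R⁻¹) := by
  have hLap : Lap g z = ((F (toC z + 1) + F (toC z - 1) + F (toC z + I) + F (toC z - I)) / 4
      - F (toC z)).im := by
    have hmap : (nbrs z).map g = ((nbrs z).map toC).map fun w => (F w).im := by
      rw [List.map_map]
      exact List.map_congr_left fun p hp => hg p (List.mem_cons_of_mem z hp)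
    rw [Lap, hmap, nbrs_map_toC, hg z List.mem_cons_self]
    simp only [List.map_cons, List.map_nil, List.sum_cons, List.sum_nil, sub_im, add_im,
      div_ofNat_im]
    ring
  rw [hLap]
  exact (abs_im_le_norm _).trans (norm_fourPointMean_sub_le hR hF hK)

lemma fIm_eq_sqrt (z : V) : fIm z = √((nrm z - z.1) / 2) := by
  by_cases hz : toC z = 0
  · have h1 := congrArg Complex.re hz
    simp only [toC_re, zero_re, Int.cast_eq_zero] at h1
    simp [fIm, nrm, hz, h1]
  have htheta : Real.cos (theta z) = Real.cos (arg (toC z)) := by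
    unfold theta
    split_ifs
    · rfl
    · rw [Real.cos_add_two_pi]
  have hrange : 0 ≤ theta z ∧ theta z ≤ 2 * Real.pi := by
    unfold theta
    split_ifs with h
    · exact ⟨h, (arg_le_pi _).trans (by linarith [Real.pi_pos])⟩
    · constructor <;> linarith [neg_pi_lt_arg (toC z), arg_le_pi (toC z)]
  rw [fIm, Real.sin_half_eq_sqrt hrange.1 hrange.2, htheta, cos_arg hz, nrm,
    ← Real.sqrt_mul (norm_nonneg _), toC_re]
  congr 1
  field_simp

lemma fIm_comp_conjV : fIm ∘ conjV = fIm := by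
  funext z
  rw [Function.comp_apply, fIm_eq_sqrt, fIm_eq_sqrt, nrm_conjV]
  rfl

lemma fIm_eq_re_cpow_half_neg (z : V) : fIm z = ((-toC z) ^ (1 / 2 : ℂ)).re := by
  rw [re_cpow_half, fIm_eq_sqrt, norm_neg, neg_re, toC_re, nrm, sub_eq_add_neg]

lemma fIm_eq_im_cpow_half {z : V} (hz : 0 ≤ z.2) : fIm z = (toC z ^ (1 / 2 : ℂ)).im := by
  rw [im_cpow_half (by rw [toC_im]; exact_mod_cast hz), fIm_eq_sqrt, toC_re, nrm]

lemma abs_lap_fIm_le_of_sqrt_branch {z : V} (F : ℂ → ℂ) (hr : 4 ≤ nrm z)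
    (hF : DifferentiableOn ℂ F (closedBall (toC z) (nrm z / 2)))
    (hFnorm : ∀ w, ‖F w‖ ≤ √‖w‖) (hfF : ∀ p ∈ z :: nbrs z, fIm p = (F (toC p)).im) :
    |Lap fIm z| ≤ 64 * nrm z ^ (-(7 / 2) : ℝ) := by
  set r := nrm z
  have hr0 : 0 < r := by linarith
  have hK : ∀ w ∈ sphere (toC z) (r / 2), ‖F w‖ ≤ √(2 * r) := by
    intro w hw
    have hw' : ‖w‖ ≤ 2 * r := by
      have := norm_le_norm_add_norm_sub' w (toC z)
      rw [← Complex.dist_eq, mem_sphere.mp hw] at this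
      change ‖w‖ ≤ r + r / 2 at this
      linarith
    exact (hFnorm w).trans (Real.sqrt_le_sqrt hw')
  have hlap := abs_lap_le_of_eq_im (by linarith) (hF.diffContOnCl_ball subset_rfl) hK hfF
  have hrpow : r ^ (-(7 / 2) : ℝ) = √r / r ^ 4 := by
    rw [show (-(7 / 2) : ℝ) = 1 / 2 - (4 : ℕ) by norm_num, Real.rpow_sub hr0,
      Real.rpow_natCast, Real.sqrt_eq_rpow]
  have hs2 : √2 ≤ 2 := by rw [Real.sqrt_le_iff]; norm_num
  have hinv : (r / 2)⁻¹ ≤ 1 / 2 := by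
    rw [inv_le_comm₀ (by positivity) (by norm_num)]
    linarith
  calc |Lap fIm z| ≤ √(2 * r) * (r / 2)⁻¹ ^ 4 / (1 - (r / 2)⁻¹) := hlap
    _ ≤ √(2 * r) * (r / 2)⁻¹ ^ 4 / (1 / 2) := by
      gcongr
      linarith
    _ = 32 * √2 * (√r / r ^ 4) := by
      rw [Real.sqrt_mul (by norm_num)]
      field_simp
      ring
    _ ≤ 64 * r ^ (-(7 / 2) : ℝ) := by
      rw [hrpow]
      gcongr
      linarith

lemma abs_lap_fIm_le_of_re_nonpos {z : V} (hx : z.1 ≤ 0) (hr : 4 ≤ nrm z) :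
    |Lap fIm z| ≤ 64 * nrm z ^ (-(7 / 2) : ℝ) := by
  refine abs_lap_fIm_le_of_sqrt_branch (fun w => I * (-w) ^ (1 / 2 : ℂ)) hr ?_ ?_ ?_
  · refine (differentiableOn_neg _).cpow_const (fun w hw => ?_) |>.const_mul I
    refine closedBall_subset_slitPlane (u := -toC z) (r := nrm z / 2) ?_
      (by rw [norm_neg]; change _ < nrm z; linarith) ?_
    · rw [neg_re, toC_re]
      exact_mod_cast neg_nonneg.mpr hx
    · rwa [mem_closedBall, dist_neg_neg]
  · intro w
    rw [norm_mul, norm_I, one_mul, norm_cpow_half, norm_neg]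
  · intro p _
    rw [I_mul_im, fIm_eq_re_cpow_half_neg]

lemma abs_lap_fIm_le_of_im_pos {z : V} (hx : 0 ≤ z.1) (hy : 0 < z.2) (hr : 4 ≤ nrm z) :
    |Lap fIm z| ≤ 64 * nrm z ^ (-(7 / 2) : ℝ) := by
  refine abs_lap_fIm_le_of_sqrt_branch (fun w => w ^ (1 / 2 : ℂ)) hr ?_
    (fun w => (norm_cpow_half w).le) ?_
  · refine differentiableOn_id.cpow_const
      (closedBall_subset_slitPlane ?_ (by change _ < nrm z; linarith))
    rw [toC_re]
    exact_mod_cast hx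
  · intro p hp
    apply fIm_eq_im_cpow_half
    simp only [nbrs, List.mem_cons, List.not_mem_nil, or_false] at hp
    rcases hp with rfl | rfl | rfl | rfl | rfl <;> (try dsimp only) <;> omega

lemma abs_lap_fIm_le_of_four_le {z : V} (hz : z ∉ Zplus) (hr : 4 ≤ nrm z) :
    |Lap fIm z| ≤ 64 * nrm z ^ (-(7 / 2) : ℝ) := by
  rcases le_or_gt z.1 0 with hx | hx
  · exact abs_lap_fIm_le_of_re_nonpos hx hr
  rcases lt_trichotomy z.2 0 with hy | hy | hy
  · have := abs_lap_fIm_le_of_im_pos (z := conjV z) hx.le (neg_pos.mpr hy)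
      (by rwa [nrm_conjV])
    rwa [lap_conjV, fIm_comp_conjV, nrm_conjV] at this
  · exact absurd ⟨hx.le, hy⟩ hz
  · exact abs_lap_fIm_le_of_im_pos hx.le hy hr

lemma abs_lap_fIm_le_sqrt (z : V) : |Lap fIm z| ≤ √(nrm z + 1) := by
  refine abs_lap_le_of_mem_Icc fun p hp => ⟨?_, ?_⟩
  · rw [fIm_eq_sqrt]
    exact Real.sqrt_nonneg _
  · have hp' : nrm p ≤ nrm z + 1 := by
      rcases List.mem_cons.mp hp with rfl | hp
      · linarith
      · exact nrm_le_of_mem_nbrs hp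
    calc fIm p ≤ √(nrm p) := mul_le_of_le_one_right (Real.sqrt_nonneg _) (Real.sin_le_one _)
      _ ≤ √(nrm z + 1) := Real.sqrt_le_sqrt hp'

/-- There exists `c < ∞` such that for all `z ∈ ℤ² ∖ ℤ₊`:
`|L f(z)| ≤ c |z|^{-7/2}`, where `f(z) = Im √z` and `L` is the discrete Laplacian. -/
theorem stmt11_laplacian_fIm_bound :
    ∃ c : ℝ, ∀ z : V, z ∉ Zplus → |Lap fIm z| ≤ c * nrm z ^ (-(7 / 2) : ℝ) := by
  refine ⟨768, fun z hz => ?_⟩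
  have hr0 : 0 < nrm z := norm_pos_iff.mpr (toC_ne_zero hz)
  rcases le_or_gt 4 (nrm z) with hfar | hnear
  · calc |Lap fIm z| ≤ 64 * nrm z ^ (-(7 / 2) : ℝ) := abs_lap_fIm_le_of_four_le hz hfar
      _ ≤ 768 * nrm z ^ (-(7 / 2) : ℝ) := by gcongr; norm_num
  · calc |Lap fIm z| ≤ √(nrm z + 1) := abs_lap_fIm_le_sqrt z
      _ ≤ 768 * (4 : ℝ) ^ (-4 : ℝ) := by
        rw [Real.sqrt_le_iff]
        norm_num
        linarith
      _ ≤ 768 * (4 : ℝ) ^ (-(7 / 2) : ℝ) := by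
        gcongr
        all_goals norm_num
      _ ≤ 768 * nrm z ^ (-(7 / 2) : ℝ) :=
        mul_le_mul_of_nonneg_left (Real.rpow_le_rpow_of_nonpos hr0 hnear.le (by norm_num))
          (by norm_num)

end LERW
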